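/- Let k ≥ s ≥ 0, t > 0 with 2(t + k − 2s) > d, and h ∈ (0,1]. Suppose Θ : ℝ^d → ℝ satisfies |F[Θ](ξ)| ≤ C (∑_{j=1}^d sin²(ξ_j))^{k/2} / |ξ|^k, and set Θ_h(x) = h^{−d} Θ(x/h). Then sup over ξ ∈ (−π/h, π/h)^d of ∑_{ζ ∈ (2π/h)ℤ^d \ {0}} |F[Θ_h](ξ+ζ)|² / (M_h(ξ+ζ)^{2s} |ξ+ζ|^{2t−4s}) ≤ C' h^{2(t−s)} for a constant C' independent of h. -/

import Mathlib

open MeasureTheory Real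
open scoped BigOperators RealInnerProductSpace

noncomputable section

abbrev Ed (d : ℕ) := EuclideanSpace ℝ (Fin d)

def latPt (d : ℕ) (h : ℝ) (z : Fin d → ℤ) : Ed d :=
  (EuclideanSpace.equiv (Fin d) ℝ).symm (fun j => h * (z j : ℝ))

def Msq (d : ℕ) (h : ℝ) (ξ : Ed d) : ℝ :=
  ∑ j : Fin d, (4 / h ^ 2) * Real.sin (ξ j * h / 2) ^ 2

def contFT (d : ℕ) (g : Ed d → ℂ) (ξ : Ed d) : ℂ :=
  ∫ x : Ed d, Complex.exp (-(Complex.I) * ((⟪ξ, x⟫ : ℝ) : ℂ)) * g x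

/-!
Write `η = ξ + (2π/h)z` with `z ∈ ℤ^d ∖ {0}`. The sine sum `A = ∑ⱼ sin²(hηⱼ)` and `M_h(η)²` are
`2π/h`-periodic, so they take their values at `ξ`. Since `sin² 2x ≤ 4 sin² x`, `A ≤ h² M_h(ξ)²`, and
trivially `A ≤ d`; hence `A^k ≤ d^(k-s) h^(2s) M_h(ξ)^(2s)`, which cancels the multiplier in the
denominator. As `|ξⱼ| ≤ π/h`, `|η| ≥ (π/h)|z|`, so the `z`-th term is at most a constant times
`h^(2(t-s)) |z|^(-2(t+k-2s))`, and this is summable over the lattice because `2(t+k-2s) > d`.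
-/

theorem EuclideanSpace.norm_le_norm_of_abs_le {ι : Type*} [Fintype ι] {x y : EuclideanSpace ℝ ι}
    (h : ∀ i, |x i| ≤ |y i|) : ‖x‖ ≤ ‖y‖ := by
  simp only [EuclideanSpace.norm_eq, Real.norm_eq_abs]
  exact Real.sqrt_le_sqrt <| Finset.sum_le_sum fun i _ => pow_le_pow_left₀ (abs_nonneg _) (h i) 2

theorem Module.Basis.summable_norm_sum_intCast_smul_rpow_neg {E : Type*} [NormedAddCommGroup E]
    [NormedSpace ℝ E] [FiniteDimensional ℝ E] {ι : Type*} [Fintype ι] (b : Basis ι ℝ E)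
    {p : ℝ} (hp : Fintype.card ι < p) :
    Summable fun z : ι → ℤ => ‖∑ i, (z i : ℝ) • b i‖ ^ (-p) := by
  let bℤ := b.restrictScalars ℤ
  have hrank : Module.finrank ℤ (Submodule.span ℤ (Set.range b)) = Fintype.card ι :=
    Module.finrank_eq_card_basis bℤ
  have := ZLattice.summable_norm_rpow (Submodule.span ℤ (Set.range b)) (-p)
    (by rw [hrank]; linarith)
  refine (bℤ.equivFun.symm.toEquiv.summable_iff.mpr this).congr fun z => ?_
  simp [bℤ, Basis.equivFun_symm_apply, Int.cast_smul_eq_zsmul]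

theorem mul_abs_intCast_le_abs_add_two_mul {a b : ℝ} (hab : |a| ≤ b) (n : ℤ) :
    b * |(n : ℝ)| ≤ |a + 2 * b * n| := by
  rcases eq_or_ne n 0 with rfl | hn
  · simp
  have hb : 0 ≤ b := (abs_nonneg a).trans hab
  have hn1 : (1 : ℝ) ≤ |(n : ℝ)| := by exact_mod_cast Int.one_le_abs hn
  have : |2 * b * n| - |a| ≤ |a + 2 * b * n| := by
    simpa [add_comm] using abs_sub_abs_le_abs_add (2 * b * n) a
  rw [abs_mul, abs_mul, abs_two, abs_of_nonneg hb] at this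
  nlinarith [mul_le_mul_of_nonneg_left hn1 hb]

theorem Real.sin_sq_add_int_mul_pi (x : ℝ) (n : ℤ) : sin (x + n * π) ^ 2 = sin x ^ 2 := by
  rw [sin_add_int_mul_pi, mul_pow, ← zpow_natCast, ← zpow_mul, Nat.cast_ofNat,
    (even_two.mul_left n).neg_one_zpow, one_mul]

theorem Real.sum_sin_sq_le_card {ι : Type*} [Fintype ι] (x : ι → ℝ) :
    ∑ i, sin (x i) ^ 2 ≤ Fintype.card ι := by
  simpa using Finset.sum_le_sum fun i (_ : i ∈ Finset.univ) => sin_sq_le_one (x i)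

theorem Real.rpow_le_rpow_sub_mul_rpow {a b c s k : ℝ} (ha : 0 ≤ a) (hab : a ≤ b) (hac : a ≤ c)
    (hs : 0 ≤ s) (hsk : s ≤ k) : a ^ k ≤ b ^ (k - s) * c ^ s := by
  have hb : 0 ≤ b := ha.trans hab
  calc a ^ k = a ^ (k - s) * a ^ s := by
        rw [← rpow_add_of_nonneg ha (sub_nonneg.2 hsk) hs, sub_add_cancel]
    _ ≤ b ^ (k - s) * c ^ s := by gcongr

theorem latPt_apply (d : ℕ) (h : ℝ) (z : Fin d → ℤ) (j : Fin d) : latPt d h z j = h * z j := rfl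

theorem latPt_one_eq_sum (d : ℕ) (z : Fin d → ℤ) :
    latPt d 1 z = ∑ j, (z j : ℝ) • EuclideanSpace.basisFun (Fin d) ℝ j := by
  ext j
  simp [latPt_apply, Pi.single_apply]

theorem summable_norm_latPt_rpow_neg {d : ℕ} {p : ℝ} (hp : d < p) :
    Summable fun z : Fin d → ℤ => ‖latPt d 1 z‖ ^ (-p) := by
  simpa [latPt_one_eq_sum] using
    (EuclideanSpace.basisFun (Fin d) ℝ).toBasis.summable_norm_sum_intCast_smul_rpow_neg
      (by simpa using hp)

theorem norm_latPt_one_pos {d : ℕ} {z : Fin d → ℤ} (hz : z ≠ 0) : 0 < ‖latPt d 1 z‖ := by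
  obtain ⟨j, hj⟩ := Function.ne_iff.mp hz
  refine norm_pos_iff.2 fun h0 => hj ?_
  simpa [latPt_apply] using congrArg (· j) h0

theorem div_mul_norm_latPt_le_norm_add_latPt {d : ℕ} {h : ℝ} (hh : 0 < h) {ξ : Ed d}
    (hξ : ∀ j, |ξ j| ≤ π / h) (z : Fin d → ℤ) :
    π / h * ‖latPt d 1 z‖ ≤ ‖ξ + latPt d (2 * π / h) z‖ := by
  rw [← abs_of_pos (div_pos pi_pos hh), ← Real.norm_eq_abs, ← norm_smul]
  refine EuclideanSpace.norm_le_norm_of_abs_le fun j => ?_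
  have := mul_abs_intCast_le_abs_add_two_mul (hξ j) (z j)
  simp only [PiLp.smul_apply, PiLp.add_apply, latPt_apply, smul_eq_mul, abs_mul,
    abs_of_pos (div_pos pi_pos hh), one_mul]
  convert this using 2
  ring

theorem Msq_nonneg (d : ℕ) (h : ℝ) (ξ : Ed d) : 0 ≤ Msq d h ξ :=
  Finset.sum_nonneg fun j _ => by positivity

theorem Msq_add_latPt {d : ℕ} {h : ℝ} (hh : h ≠ 0) (ξ : Ed d) (z : Fin d → ℤ) :
    Msq d h (ξ + latPt d (2 * π / h) z) = Msq d h ξ := by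
  refine Finset.sum_congr rfl fun j _ => ?_
  have : (ξ j + 2 * π / h * z j) * h / 2 = ξ j * h / 2 + z j * π := by field_simp
  simp only [PiLp.add_apply, latPt_apply, this, sin_sq_add_int_mul_pi]

theorem sum_sin_sq_smul_add_latPt {d : ℕ} {h : ℝ} (hh : h ≠ 0) (ξ : Ed d) (z : Fin d → ℤ) :
    ∑ j, sin ((h • (ξ + latPt d (2 * π / h) z)) j) ^ 2 = ∑ j, sin (h * ξ j) ^ 2 := by
  refine Finset.sum_congr rfl fun j _ => ?_
  have : h * (ξ j + 2 * π / h * z j) = h * ξ j + z j * (2 * π) := by field_simp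
  simp only [PiLp.smul_apply, PiLp.add_apply, latPt_apply, smul_eq_mul, this,
    sin_add_int_mul_two_pi]

theorem sum_sin_sq_mul_le_sq_mul_Msq {d : ℕ} {h : ℝ} (hh : h ≠ 0) (ξ : Ed d) :
    ∑ j, sin (h * ξ j) ^ 2 ≤ h ^ 2 * Msq d h ξ := by
  rw [Msq, Finset.mul_sum]
  refine Finset.sum_le_sum fun j _ => ?_
  have hdouble : h * ξ j = 2 * (ξ j * h / 2) := by ring
  rw [hdouble, sin_two_mul, ← mul_assoc, mul_div_cancel₀ _ (pow_ne_zero 2 hh)]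
  nlinarith [cos_sq_le_one (ξ j * h / 2), sq_nonneg (sin (ξ j * h / 2))]

theorem norm_sq_div_Msq_rpow_mul_norm_rpow_le {E : Type*} [SeminormedAddCommGroup E] {d : ℕ}
    {s t k C : ℝ} (hs : 0 ≤ s) (hks : s ≤ k) (hp : 0 ≤ t + k - 2 * s) {F : Ed d → E}
    (hF : ∀ ξ : Ed d, ‖F ξ‖ ≤ C * (∑ j, sin (ξ j) ^ 2) ^ (k / 2) / ‖ξ‖ ^ k)
    {h : ℝ} (hh : 0 < h) {ξ : Ed d} (hξ : ∀ j, |ξ j| ≤ π / h) {z : Fin d → ℤ} (hz : z ≠ 0) :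
    ‖F (h • (ξ + latPt d (2 * π / h) z))‖ ^ 2 /
        (Msq d h (ξ + latPt d (2 * π / h) z) ^ s *
          ‖ξ + latPt d (2 * π / h) z‖ ^ (2 * t - 4 * s)) ≤
      C ^ 2 * d ^ (k - s) * π ^ (-(2 * (t + k - 2 * s))) * h ^ (2 * (t - s)) *
        ‖latPt d 1 z‖ ^ (-(2 * (t + k - 2 * s))) := by
  set η := ξ + latPt d (2 * π / h) z
  set p := 2 * (t + k - 2 * s)
  set A := ∑ j, sin (h * ξ j) ^ 2
  set M := Msq d h ξ
  set L := ‖latPt d 1 z‖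
  have hL : 0 < L := norm_latPt_one_pos hz
  have hηL : π / h * L ≤ ‖η‖ := div_mul_norm_latPt_le_norm_add_latPt hh hξ z
  have hη : 0 < ‖η‖ := lt_of_lt_of_le (by positivity) hηL
  have hM : 0 ≤ M := Msq_nonneg d h ξ
  have hA : 0 ≤ A := by positivity
  have hFη : ‖F (h • η)‖ ≤ C * A ^ (k / 2) / (h * ‖η‖) ^ k := by
    have := hF (h • η)
    rwa [sum_sin_sq_smul_add_latPt hh.ne', norm_smul, Real.norm_eq_abs, abs_of_pos hh] at this
  have hAk : A ^ k ≤ d ^ (k - s) * (h ^ 2 * M) ^ s :=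
    rpow_le_rpow_sub_mul_rpow hA ((sum_sin_sq_le_card _).trans_eq (by simp))
      (sum_sin_sq_mul_le_sq_mul_Msq hh.ne' ξ) hs hks
  have hFη_sq : ‖F (h • η)‖ ^ 2 ≤ C ^ 2 * A ^ k / (h * ‖η‖) ^ (2 * k) := by
    calc ‖F (h • η)‖ ^ 2 ≤ (C * A ^ (k / 2) / (h * ‖η‖) ^ k) ^ 2 :=
          pow_le_pow_left₀ (norm_nonneg _) hFη 2
      _ = C ^ 2 * A ^ k / (h * ‖η‖) ^ (2 * k) := by
          rw [div_pow, mul_pow, ← rpow_mul_natCast hA, ← rpow_mul_natCast (by positivity),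
            Nat.cast_ofNat, div_mul_cancel₀ k two_ne_zero, mul_comm k]
  rw [Msq_add_latPt hh.ne']
  calc ‖F (h • η)‖ ^ 2 / (M ^ s * ‖η‖ ^ (2 * t - 4 * s))
      ≤ C ^ 2 * (d ^ (k - s) * (h ^ 2 * M) ^ s) / (h * ‖η‖) ^ (2 * k) /
          (M ^ s * ‖η‖ ^ (2 * t - 4 * s)) := by
        gcongr
        exact hFη_sq.trans (by gcongr)
    -- `M` may vanish, and then `M ^ s / M ^ s` is `0` or `1`: either way it is at most `1`.
    _ = C ^ 2 * d ^ (k - s) * h ^ (2 * s - 2 * k) * ‖η‖ ^ (-p) * (M ^ s / M ^ s) := by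
        have hh2 : (h ^ 2) ^ s = h ^ (2 * s) := by
          rw [← rpow_natCast, ← rpow_mul hh.le, Nat.cast_ofNat]
        rw [mul_rpow (sq_nonneg h) hM, hh2, mul_rpow hh.le hη.le, rpow_sub hh, rpow_neg hη.le,
          show p = 2 * k + (2 * t - 4 * s) by ring, rpow_add hη]
        ring
    _ ≤ C ^ 2 * d ^ (k - s) * h ^ (2 * s - 2 * k) * ‖η‖ ^ (-p) :=
        mul_le_of_le_one_right (by positivity) (div_self_le_one _)
    _ ≤ C ^ 2 * d ^ (k - s) * h ^ (2 * s - 2 * k) * (π / h * L) ^ (-p) := by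
        have hp' : -p ≤ 0 := by simp only [p]; linarith
        exact mul_le_mul_of_nonneg_left (rpow_le_rpow_of_nonpos (by positivity) hηL hp')
          (by positivity)
    _ = C ^ 2 * d ^ (k - s) * π ^ (-p) * h ^ (2 * (t - s)) * L ^ (-p) := by
        rw [mul_rpow (by positivity) hL.le, div_rpow pi_pos.le hh.le,
          show 2 * (t - s) = 2 * s - 2 * k - -p by ring, rpow_sub hh (2 * s - 2 * k) (-p)]
        ring

theorem stmt8_general (d : ℕ) (s t k : ℝ) (hs : 0 ≤ s) (hks : s ≤ k)
    (hdim : (d : ℝ) < 2 * (t + k - 2 * s)) (Θ : Ed d → ℝ) (CΘ : ℝ)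
    (hΘ : ∀ ξ : Ed d,
      ‖contFT d (fun x => (Θ x : ℂ)) ξ‖
        ≤ CΘ * (∑ j : Fin d, Real.sin (ξ j) ^ 2) ^ (k / 2) / ‖ξ‖ ^ k) :
    ∃ C' : ℝ, 0 < C' ∧
      ∀ h : ℝ, 0 < h → h ≤ 1 → ∀ ξ : Ed d, (∀ j, |ξ j| < π / h) →
        (∑' ζ : {z : Fin d → ℤ // z ≠ 0},
            ‖contFT d (fun x => (Θ x : ℂ)) (h • (ξ + latPt d (2 * π / h) ζ.1))‖ ^ 2 /
              (Msq d h (ξ + latPt d (2 * π / h) ζ.1) ^ s *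
                ‖ξ + latPt d (2 * π / h) ζ.1‖ ^ (2 * t - 4 * s)))
          ≤ C' * h ^ (2 * (t - s)) := by
  set p := 2 * (t + k - 2 * s)
  have hp : 0 ≤ t + k - 2 * s := by linarith [(Nat.cast_nonneg d : (0 : ℝ) ≤ d)]
  set K := CΘ ^ 2 * d ^ (k - s) * π ^ (-p)
  have hS := (summable_norm_latPt_rpow_neg hdim).subtype {z | z ≠ 0}
  set S := ∑' ζ : {z : Fin d → ℤ // z ≠ 0}, ‖latPt d 1 ζ.1‖ ^ (-p)
  refine ⟨K * S + 1, by positivity, fun h hh _ ξ hξ => ?_⟩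
  have hterm := fun ζ : {z : Fin d → ℤ // z ≠ 0} =>
    norm_sq_div_Msq_rpow_mul_norm_rpow_le hs hks hp hΘ hh (fun j => (hξ j).le) ζ.2
  calc _ ≤ ∑' ζ : {z : Fin d → ℤ // z ≠ 0}, K * h ^ (2 * (t - s)) * ‖latPt d 1 ζ.1‖ ^ (-p) := by
        refine (Summable.of_nonneg_of_le (fun ζ => ?_) hterm (hS.mul_left _)).tsum_le_tsum
          hterm (hS.mul_left _)
        exact div_nonneg (by positivity)
          (mul_nonneg (rpow_nonneg (Msq_nonneg _ _ _) _) (by positivity))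
    _ = K * S * h ^ (2 * (t - s)) := by rw [tsum_mul_left]; ring
    _ ≤ (K * S + 1) * h ^ (2 * (t - s)) := by gcongr; linarith

/-- Dual-lattice estimate with the kernel bound on `F[Θ]`: if `k ≥ s ≥ 0`, `t > 0`,
`2(t+k−2s) > d`, and `|F[Θ](ξ)| ≤ C (∑_j sin²ξ_j)^{k/2}/|ξ|^k`, then for `h ∈ (0,1]`,
`∑_{ζ ∈ (2π/h)ℤ^d \ {0}} |F[Θ_h](ξ+ζ)|² / (M_h(ξ+ζ)^{2s} |ξ+ζ|^{2t−4s}) ≤ C' h^{2(t−s)}`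
uniformly over `ξ ∈ (−π/h,π/h)^d`, where `F[Θ_h](ξ) = F[Θ](hξ)`. -/
theorem stmt8 (d : ℕ) (s t k : ℝ) (hs : 0 ≤ s) (hks : s ≤ k) (ht : 0 < t)
    (hdim : (d : ℝ) < 2 * (t + k - 2 * s)) (Θ : Ed d → ℝ) (CΘ : ℝ)
    (hΘ : ∀ ξ : Ed d,
      ‖contFT d (fun x => (Θ x : ℂ)) ξ‖
        ≤ CΘ * (∑ j : Fin d, Real.sin (ξ j) ^ 2) ^ (k / 2) / ‖ξ‖ ^ k) :
    ∃ C' : ℝ, 0 < C' ∧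
      ∀ h : ℝ, 0 < h → h ≤ 1 → ∀ ξ : Ed d, (∀ j, |ξ j| < π / h) →
        (∑' ζ : {z : Fin d → ℤ // z ≠ 0},
            ‖contFT d (fun x => (Θ x : ℂ)) (h • (ξ + latPt d (2 * π / h) ζ.1))‖ ^ 2 /
              (Msq d h (ξ + latPt d (2 * π / h) ζ.1) ^ s *
                ‖ξ + latPt d (2 * π / h) ζ.1‖ ^ (2 * t - 4 * s)))
          ≤ C' * h ^ (2 * (t - s)) :=
  stmt8_general d s t k hs hks hdim Θ CΘ hΘ
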